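/- arXiv:math/9603204 — 3 statements merged into one kernel-verified Lean document; each statement's English description precedes it below -/
import Mathlib

section
/- In a torsion-free group G that is commutative transitive (commuting with a fixed nontrivial element is a transitive relation, equivalently centralizers of nontrivial elements are abelian), every maximal abelian subgroup M is isolated: if g^n ∈ M for some integer n > 0, then g ∈ M. -/
/-!
If `a ≠ 1` lies in the maximal abelian subgroup `M`, then `M` centralizes `a`, and
commutative transitivity makes the centralizer of `a` abelian; by maximality `M` is that
centralizer. For `g ^ n ∈ M` with `g ^ n ≠ 1` this gives `g ∈ M`, since `g` commutes with
its own powers; the case `g ^ n = 1` is excluded by torsion-freeness unless `g = 1`.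
-/

namespace Subgroup

variable {G : Type*} [Group G]

theorem mul_comm_of_mem_centralizer_singleton
    (hct : ∀ a b c : G, a ≠ 1 → b ≠ 1 → c ≠ 1 →
      a * b = b * a → b * c = c * b → a * c = c * a)
    {a : G} (ha : a ≠ 1) :
    ∀ x ∈ centralizer {a}, ∀ y ∈ centralizer {a}, x * y = y * x := by
  intro x hx y hy
  rcases eq_or_ne x 1 with rfl | hx1
  · simp
  rcases eq_or_ne y 1 with rfl | hy1
  · simp
  exact hct x a y hx1 ha hy1 (mem_centralizer_singleton_iff.1 hx)
    (mem_centralizer_singleton_iff.1 hy).symm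

theorem le_centralizer_singleton_of_mem {M : Subgroup G}
    (hMab : ∀ x ∈ M, ∀ y ∈ M, x * y = y * x) {a : G} (ha : a ∈ M) :
    M ≤ centralizer {a} :=
  fun _ hx ↦ mem_centralizer_singleton_iff.2 (hMab _ hx a ha)

theorem eq_centralizer_singleton_of_maximal_abelian
    (hct : ∀ a b c : G, a ≠ 1 → b ≠ 1 → c ≠ 1 →
      a * b = b * a → b * c = c * b → a * c = c * a)
    {M : Subgroup G} (hMab : ∀ x ∈ M, ∀ y ∈ M, x * y = y * x)
    (hMmax : ∀ N : Subgroup G, (∀ x ∈ N, ∀ y ∈ N, x * y = y * x) → M ≤ N → N = M)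
    {a : G} (haM : a ∈ M) (ha : a ≠ 1) :
    M = centralizer {a} :=
  (hMmax _ (mul_comm_of_mem_centralizer_singleton hct ha)
    (le_centralizer_singleton_of_mem hMab haM)).symm

end Subgroup

/-- In a torsion-free commutative-transitive group, maximal abelian subgroups
are isolated. -/
theorem stmt_1 {G : Type*} [Group G]
    (htf : ∀ g : G, ∀ n : ℕ, 0 < n → g ^ n = 1 → g = 1)
    (hct : ∀ a b c : G, a ≠ 1 → b ≠ 1 → c ≠ 1 →
      a * b = b * a → b * c = c * b → a * c = c * a)
    (M : Subgroup G)
    (hMab : ∀ x ∈ M, ∀ y ∈ M, x * y = y * x)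
    (hMmax : ∀ N : Subgroup G, (∀ x ∈ N, ∀ y ∈ N, x * y = y * x) → M ≤ N → N = M) :
    ∀ (g : G) (n : ℕ), 0 < n → g ^ n ∈ M → g ∈ M := by
  intro g n hn hgn
  by_cases hg1 : g ^ n = 1
  · rw [htf g n hn hg1]
    exact M.one_mem
  rw [Subgroup.eq_centralizer_singleton_of_maximal_abelian hct hMab hMmax hgn hg1]
  exact Subgroup.mem_centralizer_singleton_iff.2 (Commute.self_pow g n)
end

section
/- In the free group F of rank 2 with basis {a, b}, the commutator [a, b] = a b a⁻¹ b⁻¹ is not a proper power: there is no element c ∈ F and integer n ≥ 2 with c^n = [a, b]. -/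
/-!
Map `F` to the discrete Heisenberg group, sending `a` and `b` to the two elementary
unitriangular matrices; `[a, b]` then goes to the central generator `(0, 0, 1)`.
If `g ^ n` is central with `n ≠ 0`, then the `x`-coordinate of `g` vanishes, and on such
elements multiplication is coordinatewise addition, so `n` divides the `z`-coordinate of
`g ^ n`. Hence `(0, 0, 1)`, and with it `[a, b]`, is not a proper power.
-/

open scoped commutatorElement

/-- `⟨x, y, z⟩` stands for the integer matrix `[[1, x, z], [0, 1, y], [0, 0, 1]]`. -/
@[ext]
structure Heisenberg where
  x : ℤ
  y : ℤ
  z : ℤ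

namespace Heisenberg

instance : Mul Heisenberg := ⟨fun g h => ⟨g.x + h.x, g.y + h.y, g.z + h.z + g.x * h.y⟩⟩
instance : One Heisenberg := ⟨⟨0, 0, 0⟩⟩
instance : Inv Heisenberg := ⟨fun g => ⟨-g.x, -g.y, g.x * g.y - g.z⟩⟩

@[simp] lemma mul_def (g h : Heisenberg) :
    g * h = ⟨g.x + h.x, g.y + h.y, g.z + h.z + g.x * h.y⟩ := rfl

@[simp] lemma inv_def (g : Heisenberg) : g⁻¹ = ⟨-g.x, -g.y, g.x * g.y - g.z⟩ := rfl

@[simp] lemma one_def : (1 : Heisenberg) = ⟨0, 0, 0⟩ := rfl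

instance : Group Heisenberg where
  mul_assoc g h k := by ext <;> simp <;> ring
  one_mul g := by ext <;> simp
  mul_one g := by ext <;> simp
  inv_mul_cancel g := by ext <;> simp

lemma pow_x (g : Heisenberg) (n : ℕ) : (g ^ n).x = n * g.x := by
  induction n with
  | zero => simp
  | succ n ih => rw [pow_succ, mul_def, ih]; push_cast; ring

lemma pow_z_of_x_eq_zero {g : Heisenberg} (hx : g.x = 0) (n : ℕ) : (g ^ n).z = n * g.z := by
  induction n with
  | zero => simp
  | succ n ih => rw [pow_succ, mul_def, ih, pow_x, hx]; push_cast; ring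

lemma dvd_of_pow_eq_center {g : Heisenberg} {n : ℕ} (hn : n ≠ 0) {k : ℤ}
    (h : g ^ n = ⟨0, 0, k⟩) : (n : ℤ) ∣ k := by
  have hgx : g.x = 0 := by
    have := congrArg x h
    rw [pow_x] at this
    simpa [hn] using this
  exact ⟨g.z, by rw [← pow_z_of_x_eq_zero hgx, h]⟩

def ofFreeGroup : FreeGroup (Fin 2) →* Heisenberg :=
  FreeGroup.lift ![⟨1, 0, 0⟩, ⟨0, 1, 0⟩]

lemma ofFreeGroup_commutator :
    ofFreeGroup ⁅FreeGroup.of (0 : Fin 2), FreeGroup.of 1⁆ = ⟨0, 0, 1⟩ := by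
  simp [ofFreeGroup, commutatorElement_def]

end Heisenberg

/-- In the free group of rank 2 on generators a = of 0 and b = of 1, the
commutator [a,b] is not a proper power. -/
theorem stmt_3 :
    ¬ ∃ (c : FreeGroup (Fin 2)) (n : ℕ), 2 ≤ n ∧
      c ^ n = FreeGroup.of 0 * FreeGroup.of 1 * (FreeGroup.of 0)⁻¹ * (FreeGroup.of 1)⁻¹ := by
  rintro ⟨c, n, hn, hc⟩
  rw [← commutatorElement_def] at hc
  have hdvd : (n : ℤ) ∣ 1 := Heisenberg.dvd_of_pow_eq_center (g := Heisenberg.ofFreeGroup c)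
    (by omega) (by rw [← map_pow, hc, Heisenberg.ofFreeGroup_commutator])
  have := Int.le_of_dvd one_pos hdvd
  omega
end

section
/- Suppose that for every pair of positive integers (g, n) there is a bound f(g,n) such that in the free group F₂ of rank 2, every z with z^n expressible as a product of g commutators is itself a product of at most f(g,n) commutators. Then the unrestricted direct power F₂^ℕ (functions ℕ → F₂ with pointwise multiplication) has torsion-free abelianization. -/
open scoped commutatorElement

/-- Padding a product of `m` terms to `M ≥ m` terms using `1`s. -/
lemma pad_prod {G : Type*} [Group G] {m M : ℕ} (h : m ≤ M) (c : Fin m → G) :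
    (List.ofFn fun j : Fin M => if hj : (j : ℕ) < m then c ⟨j, hj⟩ else 1).prod
      = (List.ofFn c).prod := by
  induction M, h using Nat.le_induction with
  | base =>
    congr 1
    exact congrArg List.ofFn (funext fun i => by simp [i.isLt])
  | succ M hM ih =>
    rw [List.ofFn_succ' (fun j : Fin (M + 1) => if hj : (j : ℕ) < m then c ⟨j, hj⟩ else 1),
      List.prod_concat]
    have hlast : ¬ ((Fin.last M : ℕ) < m) := by simp [Fin.last]; omega
    rw [dif_neg hlast, mul_one]
    exact ih

/-- If genus is uniformly bounded in F₂ (any z with z^n a product of g commutators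
is a product of at most f g n commutators), then the unrestricted direct power
F₂^ℕ has torsion-free abelianization. -/
theorem stmt_7 (f : ℕ → ℕ → ℕ)
    (hf : ∀ g n : ℕ, 0 < g → 0 < n → ∀ z : FreeGroup (Fin 2),
      (∃ x y : Fin g → FreeGroup (Fin 2),
        z ^ n = (List.ofFn fun i => ⁅x i, y i⁆).prod) →
      ∃ m, m ≤ f g n ∧ ∃ u w : Fin m → FreeGroup (Fin 2),
        z = (List.ofFn fun i => ⁅u i, w i⁆).prod) :
    ∀ (ζ : ℕ → FreeGroup (Fin 2)) (n : ℕ), 0 < n →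
      ζ ^ n ∈ commutator (ℕ → FreeGroup (Fin 2)) →
      ζ ∈ commutator (ℕ → FreeGroup (Fin 2)) := by
  intro ζ n hn hmem
  -- Step 1: ζ^n is a product of a list of commutators.
  rw [commutator_eq_closure, ← Subgroup.mem_toSubmonoid,
    Subgroup.closure_toSubmonoid] at hmem
  obtain ⟨L, hL, hLprod⟩ := Submonoid.exists_list_of_mem_closure hmem
  -- every element of L ++ [1] is a commutator
  have hL' : ∀ a ∈ (L ++ [1] : List (ℕ → FreeGroup (Fin 2))),
      ∃ x y : ℕ → FreeGroup (Fin 2), ⁅x, y⁆ = a := by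
    intro a ha
    rcases List.mem_append.mp ha with ha | ha
    · rcases hL a ha with h | h
      · exact h
      · obtain ⟨x, y, hxy⟩ := h
        refine ⟨y, x, ?_⟩
        rw [← commutatorElement_inv, hxy, inv_inv]
    · simp only [List.mem_singleton] at ha
      exact ⟨1, 1, by simp [ha]⟩
  set L' : List (ℕ → FreeGroup (Fin 2)) := L ++ [1] with hL'def
  have hprod' : ζ ^ n = L'.prod := by
    rw [hL'def, List.prod_append, List.prod_singleton, mul_one, hLprod]
  have hgpos : 0 < L'.length := by simp [hL'def]
  -- choose commutator representations for each entry of L'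
  have hget : ∀ i : Fin L'.length, ∃ x y : ℕ → FreeGroup (Fin 2), ⁅x, y⁆ = L'.get i :=
    fun i => hL' _ (List.get_mem L' i)
  choose X Y hXY using hget
  have hζn : ζ ^ n = (List.ofFn fun i : Fin L'.length => ⁅X i, Y i⁆).prod := by
    rw [hprod']
    congr 1
    conv_lhs => rw [← List.ofFn_get L']
    exact congrArg List.ofFn (funext fun i => (hXY i).symm)
  -- Step 2: apply hf pointwise
  have key : ∀ k : ℕ, ∃ m, m ≤ f L'.length n ∧ ∃ u w : Fin m → FreeGroup (Fin 2),
      ζ k = (List.ofFn fun i => ⁅u i, w i⁆).prod := by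
    intro k
    apply hf L'.length n hgpos hn
    refine ⟨fun i => X i k, fun i => Y i k, ?_⟩
    have := congrArg (Pi.evalMonoidHom (fun _ : ℕ => FreeGroup (Fin 2)) k) hζn
    rw [map_pow, map_list_prod, List.map_ofFn] at this
    exact this
  choose m hm u w huw using key
  set M : ℕ := f L'.length n with hM
  -- Step 3: assemble into commutators of the product group
  set U : Fin M → (ℕ → FreeGroup (Fin 2)) :=
    fun j k => if hj : (j : ℕ) < m k then u k ⟨j, hj⟩ else 1 with hU
  set W : Fin M → (ℕ → FreeGroup (Fin 2)) :=
    fun j k => if hj : (j : ℕ) < m k then w k ⟨j, hj⟩ else 1 with hW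
  have hζ : ζ = (List.ofFn fun j : Fin M => ⁅U j, W j⁆).prod := by
    funext k
    show ζ k = Pi.evalMonoidHom (fun _ : ℕ => FreeGroup (Fin 2)) k
      (List.ofFn fun j : Fin M => ⁅U j, W j⁆).prod
    rw [map_list_prod, List.map_ofFn]
    have h2 : (⇑(Pi.evalMonoidHom (fun _ : ℕ => FreeGroup (Fin 2)) k) ∘
        fun j : Fin M => ⁅U j, W j⁆)
        = fun j : Fin M =>
            if hj : (j : ℕ) < m k then ⁅u k ⟨j, hj⟩, w k ⟨j, hj⟩⁆ else 1 := by
      funext j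
      simp only [Function.comp_apply, map_commutatorElement]
      by_cases hjm : (j : ℕ) < m k
      · simp only [hU, hW, Pi.evalMonoidHom_apply, dif_pos hjm]
      · simp only [hU, hW, Pi.evalMonoidHom_apply, dif_neg hjm]
        show ⁅(1 : FreeGroup (Fin 2)), (1 : FreeGroup (Fin 2))⁆ = 1
        simp
    rw [h2, pad_prod (hm k) (fun i => ⁅u k i, w k i⁆)]
    exact huw k
  rw [hζ]
  apply Subgroup.list_prod_mem
  intro x hx
  rw [List.mem_ofFn] at hx
  obtain ⟨j, rfl⟩ := hx
  exact Subgroup.commutator_mem_commutator (Subgroup.mem_top _) (Subgroup.mem_top _)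
end
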